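/- Let s ∈ (0, 3/2) with s ≠ 1/2 and s ≠ 1, put α = 3 − 2s, and let p ≥ 2 be an integer. Then t_p(s) = Σ_{n=2}^∞ c_n^{(α)} · p^{α−2n}, where c_n^{(α)} = (2^{2n+1} − 8) · α(α−1)⋯(α−2n+1)/(2n)!, and the series converges. Moreover every coefficient c_n^{(α)} (n ≥ 2) has the sign of −(2s−1)(s−1). -/

import Mathlib

/-- `t_p(s)`, with the convention `0^(3-2s) = 0` (automatic for `rpow`). -/
noncomputable def tFn (s : ℝ) (p : ℕ) : ℝ :=
  |(p : ℝ) - 2| ^ (3 - 2 * s) - 4 * |(p : ℝ) - 1| ^ (3 - 2 * s) + 6 * (p : ℝ) ^ (3 - 2 * s)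
    - 4 * ((p : ℝ) + 1) ^ (3 - 2 * s) + ((p : ℝ) + 2) ^ (3 - 2 * s)

/-- The falling factorial `α(α-1)⋯(α-k+1)` with `k` factors. -/
noncomputable def fallProd (α : ℝ) (k : ℕ) : ℝ := ∏ i ∈ Finset.range k, (α - i)

/-- `c_n^{(α)} = (2^(2n+1) - 8) · α(α-1)⋯(α-2n+1) / (2n)!`. -/
noncomputable def cCoef (α : ℝ) (n : ℕ) : ℝ :=
  ((2 : ℝ) ^ (2 * n + 1) - 8) * fallProd α (2 * n) / (Nat.factorial (2 * n))

/-!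
Put `x = 1 / p` and `α = 3 - 2s`. Then
`t_p(s) = p^α ((1+2x)^α + (1-2x)^α - 4(1+x)^α - 4(1-x)^α + 6)`, and expanding each power in
its binomial series, the odd powers cancel and `x^(2n)` gets the coefficient
`(2·4^n - 8) C(α, 2n) = c_n^(α)`, which is `-6` for `n = 0` and `0` for `n = 1`.
For `p = 2` the series are needed at `|x| = 1`. There Abel's theorem applies because for `α > 0`
the series `∑ |C(α, k)|` converges: once `k ≥ α`, the relation
`(k+1) |C(α, k+1)| = (k - α) |C(α, k)|` makes `α |C(α, k)|` the difference of consecutive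
terms of the nonnegative sequence `k |C(α, k)|`, so the partial sums telescope and stay bounded.
For the sign, `C(α, 2n)` is `α(α-1)(α-2)/(2n)!` times the product of the `2n - 3` factors
`α - i` with `3 ≤ i < 2n`, each negative because `α < 3`, and
`(α - 1)(α - 2) = 2(2s - 1)(s - 1)`.
-/

open Finset Nat Filter Topology

lemma fallProd_div_factorial_eq_choose (a : ℝ) (k : ℕ) :
    fallProd a k / k ! = Ring.choose a k := by
  have hpoch : (descPochhammer ℤ k).smeval a = fallProd a k := by
    induction k with
    | zero => simp [fallProd]
    | succ k ih =>
      simp [descPochhammer_succ_right, Polynomial.smeval_mul, Polynomial.smeval_natCast, ih,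
        fallProd, prod_range_succ]
  rw [Ring.choose_eq_smul, smul_eq_mul, hpoch, div_eq_inv_mul]

lemma Ring.choose_succ_mul_succ (a : ℝ) (k : ℕ) :
    Ring.choose a (k + 1) * (k + 1) = Ring.choose a k * (a - k) := by
  rw [← fallProd_div_factorial_eq_choose, ← fallProd_div_factorial_eq_choose, fallProd,
    prod_range_succ, factorial_succ, ← fallProd]
  push_cast
  field_simp

lemma hasSum_choose_mul_pow {a x : ℝ} (hx : |x| < 1) :
    HasSum (fun k => Ring.choose a k * x ^ k) ((1 + x) ^ a) := by
  have := Real.one_add_rpow_hasFPowerSeriesOnBall_zero (a := a) |>.hasSum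
    (y := x) (by simpa [edist_dist] using hx)
  simpa [binomialSeries, FormalMultilinearSeries.ofScalars_apply_eq, mul_comm] using this

lemma summable_abs_choose {a : ℝ} (ha : 0 < a) : Summable (fun k => |Ring.choose a k|) := by
  set N := ⌈a⌉₊
  rw [← summable_nat_add_iff N]
  set b : ℕ → ℝ := fun k => |Ring.choose a (k + N)|
  set g : ℕ → ℝ := fun k => (k + N : ℝ) * b k
  have hstep : ∀ k, a * b k = g k - g (k + 1) := by
    intro k
    have hrec := congrArg abs (Ring.choose_succ_mul_succ a (k + N))
    have hkN : a ≤ (k + N : ℕ) := (le_ceil a).trans (by exact_mod_cast N.le_add_left k)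
    rw [abs_mul, abs_mul, abs_of_pos (a := ((k + N : ℕ) : ℝ) + 1) (by positivity),
      abs_of_nonpos (a := a - (k + N : ℕ)) (by linarith)] at hrec
    simp only [g, b, add_right_comm k 1 N]
    push_cast at hrec ⊢
    linarith
  refine summable_of_sum_range_le (c := g 0 / a) (fun k => abs_nonneg _) fun n => ?_
  rw [le_div_iff₀ ha, mul_comm, mul_sum]
  simp only [hstep, sum_range_sub']
  have : 0 ≤ g n := by positivity
  linarith

lemma hasSum_choose_mul_pow_of_abs_le {a x : ℝ} (ha : 0 < a) (hx : |x| ≤ 1) :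
    HasSum (fun k => Ring.choose a k * x ^ k) ((1 + x) ^ a) := by
  have hsum : Summable (fun k => Ring.choose a k * x ^ k) := by
    refine (summable_abs_choose ha).of_norm_bounded fun k => ?_
    rw [Real.norm_eq_abs, abs_mul, abs_pow]
    exact mul_le_of_le_one_right (abs_nonneg _) (pow_le_one₀ (abs_nonneg x) hx)
  have habel := Real.tendsto_tsum_powerSeries_nhdsWithin_lt hsum.hasSum.tendsto_sum_nat
  have hinterior : (fun y => ∑' k, Ring.choose a k * x ^ k * y ^ k) =ᶠ[𝓝[<] 1]
      fun y => (1 + x * y) ^ a := by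
    filter_upwards [Ioo_mem_nhdsLT one_pos] with y ⟨hy0, hy1⟩
    have hxy : |x * y| < 1 := by
      rw [abs_mul, abs_of_pos hy0]
      exact mul_lt_one_of_nonneg_of_lt_one_right hx hy0.le hy1
    simpa only [mul_pow, mul_assoc] using (hasSum_choose_mul_pow hxy).tsum_eq
  have hcont : Tendsto (fun y => (1 + x * y) ^ a) (𝓝[<] 1) (𝓝 ((1 + x) ^ a)) := by
    have : ContinuousAt (fun y => (1 + x * y) ^ a) 1 :=
      ((continuous_const.add (continuous_const.mul continuous_id)).continuousAt).rpow_const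
        (Or.inr ha.le)
    simpa using this.tendsto.mono_left nhdsWithin_le_nhds
  exact tendsto_nhds_unique (habel.congr' hinterior) hcont ▸ hsum.hasSum

lemma hasSum_choose_two_mul {a x : ℝ} (ha : 0 < a) (hx : |x| ≤ 1) :
    HasSum (fun n => 2 * Ring.choose a (2 * n) * x ^ (2 * n)) ((1 + x) ^ a + (1 - x) ^ a) := by
  have h := (hasSum_choose_mul_pow_of_abs_le ha hx).add
    (hasSum_choose_mul_pow_of_abs_le (x := -x) ha (by rwa [abs_neg]))
  have hodd : ∀ k ∉ Set.range (2 * ·),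
      Ring.choose a k * x ^ k + Ring.choose a k * (-x) ^ k = 0 := by
    intro k hk
    have : Odd k := Nat.not_even_iff_odd.mp fun ⟨m, hm⟩ => hk ⟨m, by simp [hm, two_mul]⟩
    rw [this.neg_pow]
    ring
  rw [← sub_eq_add_neg, ← (mul_right_injective₀ two_ne_zero).hasSum_iff hodd] at h
  convert h using 2 with n
  simp only [Function.comp_apply, (even_two_mul n).neg_pow]
  ring

lemma hasSum_cCoef_mul_pow {a x : ℝ} (ha : 0 < a) (hx : |x| ≤ 1 / 2) :
    HasSum (fun n => cCoef a n * x ^ (2 * n))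
      ((1 + 2 * x) ^ a + (1 - 2 * x) ^ a - 4 * ((1 + x) ^ a + (1 - x) ^ a)) := by
  have h2x : |2 * x| ≤ 1 := by rw [abs_mul, abs_two]; linarith
  have hterm : ∀ n, cCoef a n * x ^ (2 * n) = 2 * Ring.choose a (2 * n) * (2 * x) ^ (2 * n)
      - 4 * (2 * Ring.choose a (2 * n) * x ^ (2 * n)) := fun n => by
    rw [cCoef, mul_div_assoc, fallProd_div_factorial_eq_choose, mul_pow, pow_succ, pow_mul]
    ring
  simp_rw [hterm]
  exact (hasSum_choose_two_mul ha h2x).sub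
    ((hasSum_choose_two_mul ha (hx.trans (by norm_num))).mul_left 4)

lemma hasSum_cCoef_add_two_mul_pow {a x : ℝ} (ha : 0 < a) (hx : |x| ≤ 1 / 2) :
    HasSum (fun n => cCoef a (n + 2) * x ^ (2 * (n + 2)))
      ((1 + 2 * x) ^ a + (1 - 2 * x) ^ a - 4 * ((1 + x) ^ a + (1 - x) ^ a) + 6) := by
  have hlow : ∑ n ∈ range 2, cCoef a n * x ^ (2 * n) = -6 := by
    norm_num [sum_range_succ, cCoef, fallProd]
  simpa [hlow] using (hasSum_nat_add_iff' 2).mpr (hasSum_cCoef_mul_pow ha hx)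

lemma tFn_eq_rpow_mul (s : ℝ) {p : ℕ} (hp : 2 ≤ p) :
    tFn s p = (p : ℝ) ^ (3 - 2 * s) * ((1 + 2 * (p : ℝ)⁻¹) ^ (3 - 2 * s)
      + (1 - 2 * (p : ℝ)⁻¹) ^ (3 - 2 * s)
      - 4 * ((1 + (p : ℝ)⁻¹) ^ (3 - 2 * s) + (1 - (p : ℝ)⁻¹) ^ (3 - 2 * s)) + 6) := by
  have hp2 : (2 : ℝ) ≤ p := by exact_mod_cast hp
  have hp0 : (0 : ℝ) < p := by linarith
  have hx : (p : ℝ)⁻¹ ≤ 1 / 2 := by rw [inv_le_comm₀ hp0 (by norm_num)]; linarith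
  have hscale : ∀ c : ℝ, -2 ≤ c → ((p : ℝ) + c) ^ (3 - 2 * s)
      = (p : ℝ) ^ (3 - 2 * s) * (1 + c * (p : ℝ)⁻¹) ^ (3 - 2 * s) := fun c hc => by
    rw [← Real.mul_rpow hp0.le (by nlinarith [inv_pos.mpr hp0]), mul_add, mul_one, mul_left_comm,
      mul_inv_cancel₀ hp0.ne', mul_one]
  rw [tFn, abs_of_nonneg (by linarith), abs_of_nonneg (by linarith), sub_eq_add_neg _ (2 : ℝ),
    sub_eq_add_neg _ (1 : ℝ), hscale _ le_rfl, hscale _ (by norm_num), hscale 1 (by norm_num),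
    hscale 2 (by norm_num)]
  ring_nf

lemma Real.sign_mul_of_pos {c : ℝ} (hc : 0 < c) (y : ℝ) : Real.sign (c * y) = Real.sign y := by
  rcases lt_trichotomy y 0 with hy | rfl | hy
  · rw [Real.sign_of_neg hy, Real.sign_of_neg (mul_neg_of_pos_of_neg hc hy)]
  · rw [mul_zero]
  · rw [Real.sign_of_pos hy, Real.sign_of_pos (mul_pos hc hy)]

lemma fallProd_two_mul (a : ℝ) {n : ℕ} (hn : 2 ≤ n) :
    fallProd a (2 * n) = -(a * (a - 1) * (a - 2)) * ∏ i ∈ Ico 3 (2 * n), ((i : ℝ) - a) := by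
  have hodd : Odd #(Ico 3 (2 * n)) := ⟨n - 2, by rw [Nat.card_Ico]; omega⟩
  have htail : ∏ i ∈ Ico 3 (2 * n), (a - i) = -∏ i ∈ Ico 3 (2 * n), ((i : ℝ) - a) := by
    rw [← neg_one_mul, ← hodd.neg_one_pow, ← prod_neg]
    simp only [neg_sub]
  rw [fallProd, ← prod_range_mul_prod_Ico _ (by omega : 3 ≤ 2 * n), htail, prod_range_succ,
    prod_range_succ, prod_range_one]
  push_cast
  ring

lemma sign_cCoef {a : ℝ} (ha0 : 0 < a) (ha3 : a < 3) {n : ℕ} (hn : 2 ≤ n) :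
    Real.sign (cCoef a n) = Real.sign (-((a - 1) * (a - 2))) := by
  set P := ∏ i ∈ Ico 3 (2 * n), ((i : ℝ) - a)
  have hP : 0 < P := prod_pos fun i hi => by
    have : (3 : ℝ) ≤ i := by exact_mod_cast (mem_Ico.mp hi).1
    linarith
  have h32 : (32 : ℝ) ≤ 2 ^ (2 * n + 1) := by
    calc (32 : ℝ) = 2 ^ 5 := by norm_num
      _ ≤ 2 ^ (2 * n + 1) := pow_le_pow_right₀ (by norm_num) (by omega)
  have hK : 0 < (2 ^ (2 * n + 1) - 8) * a * P / (2 * n)! :=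
    div_pos (mul_pos (mul_pos (by linarith) ha0) hP) (by positivity)
  rw [show cCoef a n = (2 ^ (2 * n + 1) - 8) * a * P / (2 * n)! * -((a - 1) * (a - 2)) by
    rw [cCoef, fallProd_two_mul a hn]; ring, Real.sign_mul_of_pos hK]

theorem stmt8_general (s : ℝ) (hs : s ∈ Set.Ioo (0 : ℝ) (3 / 2))
    (α : ℝ) (hα : α = 3 - 2 * s) (p : ℕ) (hp : 2 ≤ p) :
    HasSum (fun n : ℕ => cCoef α (n + 2) * (p : ℝ) ^ (α - 2 * ((n : ℝ) + 2))) (tFn s p) ∧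
    ∀ n : ℕ, 2 ≤ n → Real.sign (cCoef α n) = Real.sign (-((2 * s - 1) * (s - 1))) := by
  obtain ⟨hs0, hs32⟩ := hs
  have hα0 : 0 < α := by linarith
  refine ⟨?_, fun n hn => ?_⟩
  · have hp2 : (2 : ℝ) ≤ p := by exact_mod_cast hp
    have hp0 : (0 : ℝ) < p := by linarith
    have hx : |(p : ℝ)⁻¹| ≤ 1 / 2 := by
      rwa [abs_inv, Nat.abs_cast, inv_le_comm₀ hp0 (by norm_num), one_div, inv_inv]
    have hterm : ∀ n : ℕ, cCoef α (n + 2) * (p : ℝ) ^ (α - 2 * ((n : ℝ) + 2))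
        = (p : ℝ) ^ α * (cCoef α (n + 2) * (p : ℝ)⁻¹ ^ (2 * (n + 2))) := fun n => by
      rw [show 2 * ((n : ℝ) + 2) = ((2 * (n + 2) : ℕ) : ℝ) by push_cast; ring,
        Real.rpow_sub_natCast hp0.ne', inv_pow]
      ring
    simp_rw [hterm]
    rw [tFn_eq_rpow_mul s hp, ← hα]
    exact (hasSum_cCoef_add_two_mul_pow hα0 hx).mul_left _
  · rw [sign_cCoef hα0 (by linarith) hn,
      show -((α - 1) * (α - 2)) = 2 * -((2 * s - 1) * (s - 1)) by rw [hα]; ring,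
      Real.sign_mul_of_pos two_pos]

theorem stmt8 (s : ℝ) (hs : s ∈ Set.Ioo (0 : ℝ) (3 / 2)) (hs' : s ≠ 1 / 2) (hs1 : s ≠ 1)
    (α : ℝ) (hα : α = 3 - 2 * s) (p : ℕ) (hp : 2 ≤ p) :
    HasSum (fun n : ℕ => cCoef α (n + 2) * (p : ℝ) ^ (α - 2 * ((n : ℝ) + 2))) (tFn s p) ∧
    ∀ n : ℕ, 2 ≤ n → Real.sign (cCoef α n) = Real.sign (-((2 * s - 1) * (s - 1))) :=
  stmt8_general s hs α hα p hp
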